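/- Let $\Gamma_g$ be a surface group of genus $g \geq 2$, let $E$ be a finite-dimensional complex representation of $\Gamma_g$, and let $e \in H^0(\Gamma_g, E) = E^{\Gamma_g}$ be a nonzero invariant vector. Then there exists a finite-dimensional representation $E'$ of $\Gamma_g$ and a $\Gamma_g$-equivariant surjection $q : E' \to E$ such that $e$ does not lie in the image of $H^0(\Gamma_g, E') \to H^0(\Gamma_g, E)$. -/

import Mathlib

/-!
Let `ρ` be the action on `E`. Make `Γ_g` act on `ℂ × E` by block matrices
`[[χ γ, c γ], [0, ρ γ]]`, where the character `χ` sends every `aᵢ` to `1` and every `bᵢ` to a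
scalar `z`, and the twisted cocycle `c` vanishes on all generators except `c a₀ = k` and
`c a₁ = f`, with `f e = 1`. The projection to `E` is equivariant and surjective, and `a₁` sends
`(t, e)` to `(t + 1, e)`, so no vector above `e` is invariant.

These generator images define a representation iff they satisfy the surface relation. The
commutator of the `i`-th handle is `[[1, cᵢ ∘ (ρ bᵢ - z) ∘ (ρ aᵢ)⁻¹ ∘ (ρ bᵢ)⁻¹], [0, ρ [aᵢ, bᵢ]]]`,
so the relation is a single linear equation for `k`, whose coefficient is invertible as soon as
`z` lies outside the finite spectrum of `ρ b₀`. Needing one handle for `f` and another for `k`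
is where `g ≥ 2` enters.
-/

open scoped commutatorElement in
/-- The surface group of genus `g`: the fundamental group of a compact Riemann surface of
genus `g`, with its standard presentation on generators `aᵢ = (i, false)`,
`bᵢ = (i, true)` and the single relation `∏ i, [aᵢ, bᵢ] = 1`. -/
def SurfaceGroup (g : ℕ) : Type :=
  PresentedGroup
    ({(List.ofFn fun i : Fin g =>
        ⁅FreeGroup.of ((i : Fin g), false), FreeGroup.of ((i : Fin g), true)⁆).prod} :
      Set (FreeGroup (Fin g × Bool)))

instance (g : ℕ) : Group (SurfaceGroup g) := by
  unfold SurfaceGroup; infer_instance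

open scoped commutatorElement

section Units

variable {R M : Type*} [Semiring R] [AddCommMonoid M] [Module R M]

@[simp]
lemma Module.End.units_inv_apply_apply (A : (M →ₗ[R] M)ˣ) (x : M) :
    (↑A⁻¹ : M →ₗ[R] M) ((A : M →ₗ[R] M) x) = x := by
  rw [← Module.End.mul_apply, A.inv_mul, Module.End.one_apply]

@[simp]
lemma Module.End.units_apply_inv_apply (A : (M →ₗ[R] M)ˣ) (x : M) :
    (A : M →ₗ[R] M) ((↑A⁻¹ : M →ₗ[R] M) x) = x := by
  rw [← Module.End.mul_apply, A.mul_inv, Module.End.one_apply]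

end Units

section BlockUnit

variable {K M : Type*} [CommRing K] [AddCommGroup M] [Module K M]

/-- The block matrix `[[z, f], [0, A]]` acting on `K × M`. -/
noncomputable def blockUnit (z : Kˣ) (f : M →ₗ[K] K) (A : (M →ₗ[K] M)ˣ) :
    (K × M →ₗ[K] K × M)ˣ where
  val := ((z : K) • LinearMap.fst K K M + f ∘ₗ LinearMap.snd K K M).prod
    ((A : M →ₗ[K] M) ∘ₗ LinearMap.snd K K M)
  inv := ((↑z⁻¹ : K) • (LinearMap.fst K K M - f ∘ₗ ↑A⁻¹ ∘ₗ LinearMap.snd K K M)).prod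
    (↑A⁻¹ ∘ₗ LinearMap.snd K K M)
  val_inv := by ext <;> simp
  inv_val := by ext <;> simp

@[simp]
lemma blockUnit_apply (z : Kˣ) (f : M →ₗ[K] K) (A : (M →ₗ[K] M)ˣ) (t : K) (x : M) :
    (blockUnit z f A : K × M →ₗ[K] K × M) (t, x) = (z * t + f x, (A : M →ₗ[K] M) x) := by
  simp [blockUnit]

@[simp]
lemma blockUnit_inv_apply (z : Kˣ) (f : M →ₗ[K] K) (A : (M →ₗ[K] M)ˣ) (t : K) (x : M) :
    (↑(blockUnit z f A)⁻¹ : K × M →ₗ[K] K × M) (t, x) =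
      (↑z⁻¹ * (t - f ((↑A⁻¹ : M →ₗ[K] M) x)), (↑A⁻¹ : M →ₗ[K] M) x) := by
  simp [blockUnit]

@[simp]
lemma snd_comp_blockUnit (z : Kˣ) (f : M →ₗ[K] K) (A : (M →ₗ[K] M)ˣ) :
    LinearMap.snd K K M ∘ₗ ↑(blockUnit z f A) = ↑A ∘ₗ LinearMap.snd K K M := by
  ext <;> simp

lemma blockUnit_mul (z₁ z₂ : Kˣ) (f₁ f₂ : M →ₗ[K] K) (A₁ A₂ : (M →ₗ[K] M)ˣ) :
    blockUnit z₁ f₁ A₁ * blockUnit z₂ f₂ A₂ =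
      blockUnit (z₁ * z₂) ((z₁ : K) • f₂ + f₁ ∘ₗ ↑A₂) (A₁ * A₂) := by
  ext <;> simp [Module.End.mul_apply]

lemma blockUnit_one : blockUnit (1 : Kˣ) (0 : M →ₗ[K] K) (1 : (M →ₗ[K] M)ˣ) = 1 := by
  ext <;> simp

lemma commutatorElement_blockUnit (f : M →ₗ[K] K) (w : Kˣ) (A B : (M →ₗ[K] M)ˣ) :
    ⁅blockUnit 1 f A, blockUnit w 0 B⁆ =
      blockUnit 1 (f ∘ₗ (((B : M →ₗ[K] M) - (w : K) • 1) * ↑A⁻¹ * ↑B⁻¹ : M →ₗ[K] M))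
        ⁅A, B⁆ := by
  ext <;> simp [commutatorElement_def, Module.End.mul_apply]
  ring

variable (K M) in
@[simps]
noncomputable def blockDiagHom : (M →ₗ[K] M)ˣ →* (K × M →ₗ[K] K × M)ˣ where
  toFun := blockUnit 1 0
  map_one' := blockUnit_one
  map_mul' A B := by simp [blockUnit_mul]

end BlockUnit

lemma Representation.isIntertwining_of_closure_eq_top {k G V W : Type*} [CommSemiring k]
    [Group G] [AddCommMonoid V] [AddCommMonoid W] [Module k V] [Module k W]
    {ρ : Representation k G V} {σ : Representation k G W} {s : Set G}
    (hs : Subgroup.closure s = ⊤) (φ : V →ₗ[k] W) (h : ∀ g ∈ s, φ ∘ₗ ρ g = σ g ∘ₗ φ) (g : G) :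
    φ ∘ₗ ρ g = σ g ∘ₗ φ := by
  induction (hs ▸ Subgroup.mem_top g : g ∈ Subgroup.closure s) using Subgroup.closure_induction
    with
  | mem x hx => exact h x hx
  | one => simp only [map_one, Module.End.one_eq_id, LinearMap.comp_id, LinearMap.id_comp]
  | mul x y _ _ hx hy =>
    simp only [map_mul, Module.End.mul_eq_comp, ← LinearMap.comp_assoc, hx]
    simp only [LinearMap.comp_assoc, hy]
  | inv x _ hx =>
    ext v
    have hxv := LinearMap.congr_fun hx (ρ x⁻¹ v)
    simp only [LinearMap.comp_apply, Representation.self_inv_apply] at hxv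
    rw [LinearMap.comp_apply, LinearMap.comp_apply, hxv, Representation.inv_self_apply]

lemma Module.End.exists_units_isUnit_sub_smul_one {K M : Type*} [Field K] [Infinite K]
    [AddCommGroup M] [Module K M] [FiniteDimensional K M] (B : Module.End K M) :
    ∃ z : Kˣ, IsUnit (B - (z : K) • 1) := by
  obtain ⟨z, hz⟩ := ((B.finite_spectrum.union (Set.finite_singleton 0)).infinite_compl).nonempty
  simp only [Set.mem_compl_iff, Set.mem_union, Set.mem_singleton_iff, not_or] at hz
  refine ⟨Units.mk0 z hz.2, ?_⟩
  simpa [Algebra.algebraMap_eq_smul_one, neg_sub] using (spectrum.notMem_iff.mp hz.1).neg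

lemma LinearMap.exists_comp_eq_of_isUnit {K M N : Type*} [CommSemiring K] [AddCommMonoid M]
    [AddCommMonoid N] [Module K M] [Module K N] {L : Module.End K M} (hL : IsUnit L)
    (φ : M →ₗ[K] N) : ∃ k : M →ₗ[K] N, k ∘ₗ L = φ :=
  ⟨φ ∘ₗ ↑hL.unit⁻¹, by rw [LinearMap.comp_assoc, ← Module.End.mul_eq_comp, hL.val_inv_mul,
    Module.End.one_eq_id, LinearMap.comp_id]⟩

namespace SurfaceGroup

variable {g : ℕ}

def relator (g : ℕ) : FreeGroup (Fin g × Bool) :=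
  (List.ofFn fun i : Fin g => ⁅FreeGroup.of (i, false), FreeGroup.of (i, true)⁆).prod

def of (s : Fin g × Bool) : SurfaceGroup g :=
  PresentedGroup.of (rels := {relator g}) s

lemma closure_range_of : Subgroup.closure (Set.range (of : Fin g × Bool → SurfaceGroup g)) = ⊤ :=
  PresentedGroup.closure_range_of _

lemma prod_commutatorElement_of :
    (List.ofFn fun i : Fin g => ⁅of (i, false), of (i, true)⁆).prod = 1 := by
  have h := PresentedGroup.one_of_mem (Set.mem_singleton (relator g))
  rw [relator, map_list_prod, List.map_ofFn] at h
  simp only [Function.comp_def, map_commutatorElement] at h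
  exact h

section Lift

variable {H : Type*} [Group H]

lemma map_prod_commutatorElement_of (φ : SurfaceGroup g →* H) :
    (List.ofFn fun i : Fin g => ⁅φ (of (i, false)), φ (of (i, true))⁆).prod = 1 := by
  simpa [map_list_prod, List.map_ofFn, Function.comp_def, map_commutatorElement] using
    congrArg φ prod_commutatorElement_of

def lift (d : Fin g × Bool → H)
    (h : (List.ofFn fun i : Fin g => ⁅d (i, false), d (i, true)⁆).prod = 1) :
    SurfaceGroup g →* H :=
  PresentedGroup.toGroup (rels := {relator g}) (f := d) <| by
    rintro r rfl
    simpa [relator, map_list_prod, List.map_ofFn, Function.comp_def, map_commutatorElement]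

@[simp]
lemma lift_of (d : Fin g × Bool → H)
    (h : (List.ofFn fun i : Fin g => ⁅d (i, false), d (i, true)⁆).prod = 1) (s : Fin g × Bool) :
    lift d h (of s) = d s :=
  PresentedGroup.toGroup.of _

end Lift

section Extension

variable {K M : Type*} [CommRing K] [AddCommGroup M] [Module K M]

noncomputable def extensionGen (ρ : SurfaceGroup g →* (M →ₗ[K] M)ˣ) (z : Kˣ)
    (c : Fin g → M →ₗ[K] K) : Fin g × Bool → (K × M →ₗ[K] K × M)ˣ
  | (i, false) => blockUnit 1 (c i) (ρ (of (i, false)))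
  | (i, true) => blockUnit z 0 (ρ (of (i, true)))

noncomputable def handleOperator (ρ : SurfaceGroup g →* (M →ₗ[K] M)ˣ) (z : Kˣ) (i : Fin g) :
    Module.End K M :=
  ((ρ (of (i, true)) : Module.End K M) - (z : K) • 1) * ↑(ρ (of (i, false)))⁻¹ *
    ↑(ρ (of (i, true)))⁻¹

lemma commutatorElement_extensionGen (ρ : SurfaceGroup g →* (M →ₗ[K] M)ˣ) (z : Kˣ)
    (c : Fin g → M →ₗ[K] K) (i : Fin g) :
    ⁅extensionGen ρ z c (i, false), extensionGen ρ z c (i, true)⁆ =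
      blockUnit 1 (c i ∘ₗ handleOperator ρ z i) ⁅ρ (of (i, false)), ρ (of (i, true))⁆ :=
  commutatorElement_blockUnit _ _ _ _

lemma prod_commutatorElement_extensionGen {n : ℕ} (ρ : SurfaceGroup (n + 2) →* (M →ₗ[K] M)ˣ)
    (z : Kˣ) {k f : M →ₗ[K] K}
    (hk : k ∘ₗ (handleOperator ρ z 0 *
      ((⁅ρ (of (1, false)), ρ (of (1, true))⁆ : (M →ₗ[K] M)ˣ) : Module.End K M)) =
      -(f ∘ₗ handleOperator ρ z 1)) :
    (List.ofFn fun i => ⁅extensionGen ρ z (Fin.cons k (Fin.cons f 0)) (i, false),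
      extensionGen ρ z (Fin.cons k (Fin.cons f 0)) (i, true)⁆).prod = 1 := by
  set Q : Fin (n + 2) → (M →ₗ[K] M)ˣ := fun i => ⁅ρ (of (i, false)), ρ (of (i, true))⁆
  set T := (List.ofFn fun j : Fin n => Q j.succ.succ).prod
  have hQ : Q 0 * (Q 1 * T) = 1 := by
    simpa [List.ofFn_succ] using map_prod_commutatorElement_of ρ
  have htail : (List.ofFn fun j : Fin n => blockUnit 1 (0 : M →ₗ[K] K) (Q j.succ.succ)).prod =
      blockUnit 1 0 T := by
    simp only [← blockDiagHom_apply, T, map_list_prod, List.map_ofFn, Function.comp_def]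
  simp only [commutatorElement_extensionGen, List.ofFn_succ, List.prod_cons, Fin.cons_zero,
    Fin.cons_succ, Fin.succ_zero_eq_one, Pi.zero_apply, LinearMap.zero_comp]
  rw [htail, blockUnit_mul, blockUnit_mul, hQ, ← blockUnit_one]
  congr 1
  · simp
  · simp only [Units.val_one, one_smul, smul_zero, zero_add, Units.val_mul,
      Module.End.mul_eq_comp, ← LinearMap.comp_assoc]
    rw [LinearMap.comp_assoc _ _ k, ← Module.End.mul_eq_comp, hk, LinearMap.neg_comp,
      add_neg_cancel]

end Extension

theorem exists_extension_forall_notMem_invariants {K M : Type*} [Field K] [Infinite K]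
    [AddCommGroup M] [Module K M] [FiniteDimensional K M] {n : ℕ}
    (ρ : Representation K (SurfaceGroup (n + 2)) M) {e : M} (he : e ≠ 0) :
    ∃ ρ' : Representation K (SurfaceGroup (n + 2)) (K × M),
      (∀ γ, LinearMap.snd K K M ∘ₗ ρ' γ = ρ γ ∘ₗ LinearMap.snd K K M) ∧
        ∀ t : K, (t, e) ∉ ρ'.invariants := by
  set ρU := ρ.asGroupHom
  obtain ⟨f, hf⟩ := Module.Projective.exists_dual_eq_one K he
  obtain ⟨z, hz⟩ := Module.End.exists_units_isUnit_sub_smul_one (ρ (of (0, true)))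
  have hL : IsUnit (handleOperator ρU z 0 *
      ((⁅ρU (of (1, false)), ρU (of (1, true))⁆ : (M →ₗ[K] M)ˣ) : Module.End K M)) :=
    ((hz.mul (Units.isUnit _)).mul (Units.isUnit _)).mul (Units.isUnit _)
  obtain ⟨k, hk⟩ := LinearMap.exists_comp_eq_of_isUnit hL (-(f ∘ₗ handleOperator ρU z 1))
  set d := extensionGen ρU z (Fin.cons k (Fin.cons f 0))
  set ρ' := (Units.coeHom _).comp (lift d (prod_commutatorElement_extensionGen ρU z hk))
  refine ⟨ρ', Representation.isIntertwining_of_closure_eq_top closure_range_of _ ?_,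
    fun t ht => ?_⟩
  · rintro _ ⟨⟨i, _ | _⟩, rfl⟩ <;>
      simp [ρ', d, extensionGen, ρU, Representation.asGroupHom_apply]
  · have hfst := congrArg Prod.fst (ht (of (1, false)))
    simp [ρ', d, extensionGen, hf] at hfst

end SurfaceGroup

theorem surface_group_invariant_vector_not_liftable_general
    (g : ℕ) (hg : 2 ≤ g)
    (E : Rep.{0} ℂ (SurfaceGroup g)) (hE : FiniteDimensional ℂ E)
    (e : E) (hne : e ≠ 0) :
    ∃ (E' : Rep.{0} ℂ (SurfaceGroup g)) (_ : FiniteDimensional ℂ E') (q : E' ⟶ E),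
      Function.Surjective q.hom ∧
        e ∉ q.hom '' (E'.ρ.invariants : Set E') := by
  obtain ⟨n, rfl⟩ := Nat.exists_eq_add_of_le' hg
  obtain ⟨ρ', hsnd, hnot⟩ := SurfaceGroup.exists_extension_forall_notMem_invariants E.ρ hne
  refine ⟨Rep.of ρ', inferInstanceAs (FiniteDimensional ℂ (ℂ × E)),
    Rep.ofHom ⟨LinearMap.snd ℂ ℂ E, hsnd⟩, fun x => ⟨(0, x), rfl⟩, ?_⟩
  rintro ⟨⟨t, x⟩, hinv, rfl⟩
  exact hnot t hinv

/-- Let `Γ_g` be a surface group of genus `g ≥ 2`, `E` a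
finite-dimensional complex representation of `Γ_g`, and `e ∈ H⁰(Γ_g, E) = E^{Γ_g}` a
nonzero invariant vector.  Then there exists a finite-dimensional representation `E'` and a
`Γ_g`-equivariant surjection `q : E' → E` such that `e` is not in the image of
`H⁰(Γ_g, E') → H⁰(Γ_g, E)`. -/
theorem surface_group_invariant_vector_not_liftable
    (g : ℕ) (hg : 2 ≤ g)
    (E : Rep.{0} ℂ (SurfaceGroup g)) (hE : FiniteDimensional ℂ E)
    (e : E) (he : e ∈ E.ρ.invariants) (hne : e ≠ 0) :
    ∃ (E' : Rep.{0} ℂ (SurfaceGroup g)) (_ : FiniteDimensional ℂ E') (q : E' ⟶ E),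
      Function.Surjective q.hom ∧
        e ∉ q.hom '' (E'.ρ.invariants : Set E') :=
  surface_group_invariant_vector_not_liftable_general g hg E hE e hne
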